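/- arXiv:1403.1638 — 3 statements merged into one kernel-verified Lean document; each statement's English description precedes it below -/
import Mathlib

section
/- For vectors b(x_i) = (M_p^{-1} p(x_i) - M_1^{-1}) f(x_i) indexed over a finite set, the sum of b(x_i) b(x_i)' is positive semidefinite, and hence M_p^{-1} M_{p^2} M_p^{-1} - M_1^{-1} is positive semidefinite. -/
/-! Each `b i * b iᵀ` is a rank-one positive semidefinite matrix. Expanding
`b i = (w i • Mp⁻¹ - M1⁻¹) f i` and summing, the four terms are `Mp⁻¹ Mp2 Mp⁻¹`,
`-M1⁻¹ Mp Mp⁻¹`, `-Mp⁻¹ Mp M1⁻¹` and `M1⁻¹ M1 M1⁻¹` (the Gram matrices being symmetric),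
so the sum is `Mp⁻¹ Mp2 Mp⁻¹ - M1⁻¹`. -/

open Matrix Finset

namespace Matrix

variable {ι m n R : Type*} [Fintype ι] [CommRing R]

theorem isSymm_sum_smul_vecMulVec_self (f : ι → n → R) (w : ι → R) :
    (∑ i, w i • vecMulVec (f i) (f i)).IsSymm := by
  simp only [IsSymm, transpose_sum, transpose_smul, transpose_vecMulVec]

variable [Fintype n]

theorem posSemidef_sum_vecMulVec_self [PartialOrder R] [StarRing R] [TrivialStar R]
    [StarOrderedRing R] (v : ι → n → R) : (∑ i, vecMulVec (v i) (v i)).PosSemidef :=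
  posSemidef_sum _ fun i _ => by
    simpa only [star_trivial] using posSemidef_vecMulVec_self_star (v i)

theorem vecMulVec_mulVec_mulVec (A B : Matrix m n R) (v : n → R) :
    vecMulVec (A *ᵥ v) (B *ᵥ v) = A * vecMulVec v v * Bᵀ := by
  rw [mul_vecMulVec, vecMulVec_mul, vecMul_transpose]

theorem sum_vecMulVec_smul_sub_mulVec (f : ι → n → R) (w : ι → R) (P Q : Matrix m n R) :
    ∑ i, vecMulVec ((w i • P - Q) *ᵥ f i) ((w i • P - Q) *ᵥ f i) =
      P * (∑ i, w i ^ 2 • vecMulVec (f i) (f i)) * Pᵀ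
        - P * (∑ i, w i • vecMulVec (f i) (f i)) * Qᵀ
        - Q * (∑ i, w i • vecMulVec (f i) (f i)) * Pᵀ
        + Q * (∑ i, vecMulVec (f i) (f i)) * Qᵀ := by
  simp only [Matrix.mul_sum, Matrix.sum_mul, ← sum_sub_distrib, ← sum_add_distrib]
  refine sum_congr rfl fun i _ => ?_
  rw [vecMulVec_mulVec_mulVec, transpose_sub, transpose_smul]
  simp only [Matrix.sub_mul, Matrix.mul_sub, Matrix.smul_mul, Matrix.mul_smul, sq]
  module

end Matrix

/-- For b(x_i) = (M_p⁻¹ p(x_i) − M_1⁻¹) f(x_i), the sum Σ b(x_i) b(x_i)'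
is positive semidefinite, and hence M_p⁻¹ M_{p²} M_p⁻¹ − M_1⁻¹ is positive semidefinite. -/
theorem stmt0 {N q : ℕ} (f : Fin N → Fin q → ℝ) (w : Fin N → ℝ)
    (Mp Mp2 M1 : Matrix (Fin q) (Fin q) ℝ)
    (hMp : Mp = ∑ i, w i • vecMulVec (f i) (f i))
    (hMp2 : Mp2 = ∑ i, (w i) ^ 2 • vecMulVec (f i) (f i))
    (hM1 : M1 = ∑ i, vecMulVec (f i) (f i))
    (hMpinv : IsUnit Mp.det) (hM1inv : IsUnit M1.det) :
    (∑ i, vecMulVec ((w i • Mp⁻¹ - M1⁻¹).mulVec (f i))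
        ((w i • Mp⁻¹ - M1⁻¹).mulVec (f i))).PosSemidef
      ∧ (Mp⁻¹ * Mp2 * Mp⁻¹ - M1⁻¹).PosSemidef := by
  have hpsd := posSemidef_sum_vecMulVec_self fun i ↦ (w i • Mp⁻¹ - M1⁻¹) *ᵥ f i
  have hMpT : Mp⁻¹ᵀ = Mp⁻¹ := (hMp ▸ isSymm_sum_smul_vecMulVec_self f w).inv.eq
  have hM1T : M1⁻¹ᵀ = M1⁻¹ := by
    simpa [hM1] using (isSymm_sum_smul_vecMulVec_self f 1).inv.eq
  have hsum : ∑ i, vecMulVec ((w i • Mp⁻¹ - M1⁻¹) *ᵥ f i) ((w i • Mp⁻¹ - M1⁻¹) *ᵥ f i) =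
      Mp⁻¹ * Mp2 * Mp⁻¹ - M1⁻¹ := by
    rw [sum_vecMulVec_smul_sub_mulVec, ← hMp, ← hMp2, ← hM1, hMpT, hM1T,
      nonsing_inv_mul _ hMpinv, Matrix.mul_assoc M1⁻¹, mul_nonsing_inv _ hMpinv,
      Matrix.mul_one, nonsing_inv_mul _ hM1inv]
    abel
  exact ⟨hpsd, hsum ▸ hpsd⟩
end

section
/- If M_p and M_1 are invertible, then M_p^{-1} M_{p^2} M_p^{-1} ⪰ M_1^{-1}, i.e., the matrix M_p^{-1} M_{p^2} M_p^{-1} - M_1^{-1} is positive semidefinite. -/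
open Matrix Finset
open scoped ComplexOrder

/-!
The block matrix `[[M_{p²}, M_p], [M_p, M_1]]` is the Gram sum `∑ gᵢ gᵢᵀ` with
`gᵢ = (p(xᵢ) f(xᵢ), f(xᵢ))`, hence positive semidefinite. Since `M_1` is positive definite, its
Schur complement `M_{p²} - M_p M_1⁻¹ M_p` is positive semidefinite, and conjugating by the
symmetric matrix `M_p⁻¹` gives `M_p⁻¹ M_{p²} M_p⁻¹ - M_1⁻¹ ⪰ 0`.
-/

namespace Matrix

variable {ι m n R : Type*} [Fintype ι]

theorem sum_vecMulVec_sumElim [CommSemiring R] (g : ι → m → R) (h : ι → n → R) :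
    ∑ i, vecMulVec (Sum.elim (g i) (h i)) (Sum.elim (g i) (h i)) =
      fromBlocks (∑ i, vecMulVec (g i) (g i)) (∑ i, vecMulVec (g i) (h i))
        (∑ i, vecMulVec (h i) (g i)) (∑ i, vecMulVec (h i) (h i)) := by
  ext (j | j) (k | k) <;> simp [Matrix.sum_apply, vecMulVec_apply]

theorem posSemidef_fromBlocks_sum_weighted_vecMulVec [Fintype n] (w : ι → ℝ) (f : ι → n → ℝ) :
    (fromBlocks (∑ i, w i ^ 2 • vecMulVec (f i) (f i)) (∑ i, w i • vecMulVec (f i) (f i))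
      (∑ i, w i • vecMulVec (f i) (f i)) (∑ i, vecMulVec (f i) (f i))).PosSemidef := by
  have h := posSemidef_sum univ fun i _ =>
    posSemidef_vecMulVec_self_star (Sum.elim (w i • f i) (f i))
  simp only [star_trivial, sum_vecMulVec_sumElim] at h
  convert h using 2 <;> refine sum_congr rfl fun i _ => ?_ <;>
    simp only [smul_vecMulVec, vecMulVec_smul, smul_smul, sq]

variable [Fintype n] [DecidableEq n] {𝕜 : Type*} [RCLike 𝕜]

theorem PosSemidef.inv_mul_mul_inv_sub_inv {A B D : Matrix n n 𝕜}
    (h : (fromBlocks A B B D).PosSemidef) (hB : IsUnit B.det) (hD : IsUnit D.det) :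
    (B⁻¹ * A * B⁻¹ - D⁻¹).PosSemidef := by
  have hBH : Bᴴ = B := (isHermitian_fromBlocks_iff.mp h.1).2.1
  have hDpos : D.PosDef :=
    (h.submatrix Sum.inr : D.PosSemidef).posDef_iff_isUnit.mpr ((isUnit_iff_isUnit_det D).mpr hD)
  let := hDpos.isUnit.invertible
  have hschur : (A - B * D⁻¹ * B).PosSemidef := by
    simpa only [hBH] using (PosDef.fromBlocks₂₂ A B hDpos).mp (by rwa [hBH])
  have hconj : B⁻¹ * (A - B * D⁻¹ * B) * B⁻¹ = B⁻¹ * A * B⁻¹ - D⁻¹ := by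
    simp only [Matrix.mul_sub, Matrix.sub_mul, ← mul_assoc, nonsing_inv_mul _ hB, one_mul]
    rw [mul_assoc D⁻¹, mul_nonsing_inv _ hB, mul_one, mul_assoc]
  simpa only [conjTranspose_nonsing_inv, hBH, hconj] using hschur.mul_mul_conjTranspose_same B⁻¹

end Matrix

/-- If M_p and M_1 are invertible, then M_p⁻¹ M_{p²} M_p⁻¹ ⪰ M_1⁻¹. -/
theorem stmt1 {N q : ℕ} (f : Fin N → Fin q → ℝ) (w : Fin N → ℝ)
    (Mp Mp2 M1 : Matrix (Fin q) (Fin q) ℝ)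
    (hMp : Mp = ∑ i, w i • vecMulVec (f i) (f i))
    (hMp2 : Mp2 = ∑ i, (w i) ^ 2 • vecMulVec (f i) (f i))
    (hM1 : M1 = ∑ i, vecMulVec (f i) (f i))
    (hMpinv : IsUnit Mp.det) (hM1inv : IsUnit M1.det) :
    (Mp⁻¹ * Mp2 * Mp⁻¹ - M1⁻¹).PosSemidef := by
  subst hMp hMp2 hM1
  exact PosSemidef.inv_mul_mul_inv_sub_inv
    (posSemidef_fromBlocks_sum_weighted_vecMulVec w f) hMpinv hM1inv
end

section
/- With S_k(r) = Σ_{ξ_i>0} f(x_i) f(x_i)' ξ_i^{k(1−r/2)}, at r = 1 the sandwich matrix satisfies S_1(1)^{-1} S_0 S_1(1)^{-1} ⪰ A_ξ^{-1} ⪰ (N A)^{-1}, where S_0 = Σ_{ξ_i>0} f(x_i) f(x_i)' ξ_i and A_ξ = Σ_{ξ_i>0} f(x_i) f(x_i)'. Moreover, for the uniform design ξ_i ≡ 1/N both inequalities are equalities. -/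
/-!
The block matrix `∑ᵢ (√ξᵢ fᵢ, fᵢ)(√ξᵢ fᵢ, fᵢ)ᵀ = [[S₀, S₁], [S₁, A_ξ]]` is positive semidefinite,
so its Schur complement `S₀ - S₁ A_ξ⁻¹ S₁` is too; conjugating by `S₁⁻¹` gives the first
inequality. The second is antitonicity of the inverse applied to `A_ξ ⪯ N A`, itself proved by
taking the two Schur complements of `[[N A, 1], [1, A_ξ⁻¹]]`. For the uniform design `S₁` and `S₀`
are scalar multiples of `A_ξ = N A`.
-/

open Matrix Finset

namespace Matrix

section Conjugation

variable {R n : Type*} [CommRing R] [Fintype n] [DecidableEq n]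

theorem nonsing_inv_mul_mul_nonsing_inv_of_eq {S P Q : Matrix n n R} (hS : IsUnit S.det)
    (hP : P = S * Q * S) : S⁻¹ * P * S⁻¹ = Q := by
  rw [hP, Matrix.mul_assoc, Matrix.mul_assoc, mul_nonsing_inv _ hS, Matrix.mul_one,
    ← Matrix.mul_assoc, nonsing_inv_mul _ hS, Matrix.one_mul]

theorem posSemidef_nonsing_inv_mul_mul_nonsing_inv_sub [PartialOrder R] [StarRing R]
    {S P Q : Matrix n n R} (hS : S.IsHermitian) (hSu : IsUnit S.det)
    (h : (P - S * Q * S).PosSemidef) : (S⁻¹ * P * S⁻¹ - Q).PosSemidef := by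
  have := h.conjTranspose_mul_mul_same S⁻¹
  rwa [hS.inv, Matrix.mul_sub, Matrix.sub_mul,
    nonsing_inv_mul_mul_nonsing_inv_of_eq hSu rfl] at this

end Conjugation

section SchurComplement

variable {R ι m n : Type*} [Field R] [PartialOrder R] [StarRing R] [StarOrderedRing R]
  [Fintype m] [Fintype n]

theorem posSemidef_fromBlocks_sum_vecMulVec (s : Finset ι) (g : ι → m → R) (h : ι → n → R) :
    (fromBlocks (∑ i ∈ s, vecMulVec (g i) (star (g i))) (∑ i ∈ s, vecMulVec (g i) (star (h i)))
      (∑ i ∈ s, vecMulVec (h i) (star (g i)))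
      (∑ i ∈ s, vecMulVec (h i) (star (h i)))).PosSemidef := by
  have hsum : fromBlocks (∑ i ∈ s, vecMulVec (g i) (star (g i)))
      (∑ i ∈ s, vecMulVec (g i) (star (h i))) (∑ i ∈ s, vecMulVec (h i) (star (g i)))
      (∑ i ∈ s, vecMulVec (h i) (star (h i)))
      = ∑ i ∈ s, vecMulVec (Sum.elim (g i) (h i)) (star (Sum.elim (g i) (h i))) := by
    ext (a | a) (b | b) <;> simp [vecMulVec_apply, Matrix.sum_apply]
  rw [hsum]
  exact posSemidef_sum s fun i _ => posSemidef_vecMulVec_self_star _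

theorem posSemidef_sum_vecMulVec_sub_mul_inv_mul [DecidableEq n] (s : Finset ι)
    (g : ι → m → R) (h : ι → n → R) (hh : (∑ i ∈ s, vecMulVec (h i) (star (h i))).PosDef) :
    (∑ i ∈ s, vecMulVec (g i) (star (g i)) - (∑ i ∈ s, vecMulVec (g i) (star (h i))) *
      (∑ i ∈ s, vecMulVec (h i) (star (h i)))⁻¹ *
      (∑ i ∈ s, vecMulVec (h i) (star (g i)))).PosSemidef := by
  let := hh.isUnit.invertible
  have hB : (∑ i ∈ s, vecMulVec (g i) (star (h i)))ᴴ = ∑ i ∈ s, vecMulVec (h i) (star (g i)) := by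
    simp [conjTranspose_sum]
  rw [← hB, ← PosDef.fromBlocks₂₂ _ _ hh, hB]
  exact posSemidef_fromBlocks_sum_vecMulVec s g h

theorem PosDef.posSemidef_inv_sub_inv [DecidableEq n] {B C : Matrix n n R} (hC : C.PosDef)
    (hCB : (B - C).PosSemidef) : (C⁻¹ - B⁻¹).PosSemidef := by
  have hB : B.PosDef := by simpa using hC.add_posSemidef hCB
  let := hB.isUnit.invertible
  let := hC.inv.isUnit.invertible
  have hblock : (fromBlocks B 1 1ᴴ C⁻¹).PosSemidef := by
    rw [PosDef.fromBlocks₂₂ _ _ hC.inv]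
    simpa [nonsing_inv_nonsing_inv C ((isUnit_iff_isUnit_det C).mp hC.isUnit)] using hCB
  simpa using (PosDef.fromBlocks₁₁ _ _ hB).mp hblock

end SchurComplement

section RealGram

variable {ι n : Type*}

theorem isHermitian_sum_smul_vecMulVec (s : Finset ι) (w : ι → ℝ) (f : ι → n → ℝ) :
    (∑ i ∈ s, w i • vecMulVec (f i) (f i)).IsHermitian := by
  simp [IsHermitian, transpose_sum, transpose_smul]

theorem posSemidef_sum_vecMulVec_self_s8 [Fintype n] (s : Finset ι) (f : ι → n → ℝ) :
    (∑ i ∈ s, vecMulVec (f i) (f i)).PosSemidef :=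
  posSemidef_sum s fun i _ => by simpa using posSemidef_vecMulVec_self_star (f i)

theorem posSemidef_sum_smul_vecMulVec_sub_sqrt [Fintype n] [DecidableEq n] (s : Finset ι)
    (w : ι → ℝ) (hw : ∀ i ∈ s, 0 ≤ w i) (f : ι → n → ℝ) (hf : (∑ i ∈ s, vecMulVec (f i) (f i)).PosDef) :
    (∑ i ∈ s, w i • vecMulVec (f i) (f i) -
      (∑ i ∈ s, √(w i) • vecMulVec (f i) (f i)) * (∑ i ∈ s, vecMulVec (f i) (f i))⁻¹ *
      (∑ i ∈ s, √(w i) • vecMulVec (f i) (f i))).PosSemidef := by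
  have key := posSemidef_sum_vecMulVec_sub_mul_inv_mul s (fun i => √(w i) • f i) f
    (by simpa using hf)
  have hw' : ∀ i ∈ s, vecMulVec (√(w i) • f i) (√(w i) • f i) = w i • vecMulVec (f i) (f i) :=
    fun i hi => by rw [smul_vecMulVec, vecMulVec_smul, smul_smul, Real.mul_self_sqrt (hw i hi)]
  simp only [star_trivial] at key
  rwa [sum_congr rfl hw', funext fun i => smul_vecMulVec (√(w i)) (f i) (f i),
    funext fun i => vecMulVec_smul (√(w i)) (f i) (f i)] at key

end RealGram

end Matrix

theorem stmt8_general {N q : ℕ} (f : Fin N → Fin q → ℝ) (ξ : Fin N → ℝ)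
    (hsum : ∑ i, ξ i = 1)
    (S1 S0 Aξ A : Matrix (Fin q) (Fin q) ℝ)
    (hS1 : S1 = ∑ i ∈ univ.filter (fun i => 0 < ξ i), Real.sqrt (ξ i) • vecMulVec (f i) (f i))
    (hS0 : S0 = ∑ i ∈ univ.filter (fun i => 0 < ξ i), ξ i • vecMulVec (f i) (f i))
    (hAξ : Aξ = ∑ i ∈ univ.filter (fun i => 0 < ξ i), vecMulVec (f i) (f i))
    (hA : A = ((N : ℝ)⁻¹) • ∑ i, vecMulVec (f i) (f i))
    (hS1inv : IsUnit S1.det) (hAξinv : IsUnit Aξ.det) :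
    (S1⁻¹ * S0 * S1⁻¹ - Aξ⁻¹).PosSemidef
      ∧ (Aξ⁻¹ - (((N : ℝ)) • A)⁻¹).PosSemidef
      ∧ ((∀ i, ξ i = 1 / (N : ℝ)) →
          S1⁻¹ * S0 * S1⁻¹ = Aξ⁻¹ ∧ Aξ⁻¹ = (((N : ℝ)) • A)⁻¹) := by
  have hN : (0 : ℝ) < N := Nat.cast_pos.mpr (Nat.pos_of_ne_zero (by rintro rfl; simp at hsum))
  have hNA : (N : ℝ) • A = ∑ i, vecMulVec (f i) (f i) := by
    rw [hA, smul_smul, mul_inv_cancel₀ hN.ne', one_smul]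
  have hAξpd : Aξ.PosDef := (hAξ ▸ posSemidef_sum_vecMulVec_self_s8 _ f).posDef_iff_isUnit.mpr
    ((isUnit_iff_isUnit_det _).mpr hAξinv)
  have hgap : ((N : ℝ) • A - Aξ).PosSemidef := by
    rw [hNA, hAξ, ← sum_filter_add_sum_filter_not univ (fun i => 0 < ξ i), add_sub_cancel_left]
    exact posSemidef_sum_vecMulVec_self_s8 _ f
  refine ⟨?_, hAξpd.posSemidef_inv_sub_inv hgap, fun hu => ?_⟩
  · refine posSemidef_nonsing_inv_mul_mul_nonsing_inv_sub
      (hS1 ▸ isHermitian_sum_smul_vecMulVec _ _ f) hS1inv ?_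
    subst hS1 hS0 hAξ
    exact posSemidef_sum_smul_vecMulVec_sub_sqrt _ ξ (fun i hi => (mem_filter.mp hi).2.le) f hAξpd
  have hs : univ.filter (fun i => 0 < ξ i) = univ :=
    filter_true_of_mem fun i _ => by rw [hu i]; positivity
  have hS1_eq : S1 = √(1 / (N : ℝ)) • Aξ := by
    rw [hS1, hAξ, hs, smul_sum]; simp_rw [hu]
  have hS0_eq : S0 = (1 / (N : ℝ)) • Aξ := by
    rw [hS0, hAξ, hs, smul_sum]; simp_rw [hu]
  refine ⟨nonsing_inv_mul_mul_nonsing_inv_of_eq hS1inv ?_, by rw [hAξ, hs, hNA]⟩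
  rw [hS1_eq, hS0_eq, smul_mul_assoc, mul_nonsing_inv _ hAξinv, smul_mul_assoc, Matrix.one_mul,
    smul_smul, Real.mul_self_sqrt (by positivity)]

/-- With S_1(1), S_0, A_ξ the weighted Gram matrices of a design ξ on its
support, S_1(1)⁻¹ S_0 S_1(1)⁻¹ ⪰ A_ξ⁻¹ ⪰ (N A)⁻¹, with equalities for the uniform
design ξ_i ≡ 1/N. -/
theorem stmt8 {N q : ℕ} (f : Fin N → Fin q → ℝ) (ξ : Fin N → ℝ)
    (hξ : ∀ i, 0 ≤ ξ i) (hsum : ∑ i, ξ i = 1)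
    (S1 S0 Aξ A : Matrix (Fin q) (Fin q) ℝ)
    (hS1 : S1 = ∑ i ∈ univ.filter (fun i => 0 < ξ i), Real.sqrt (ξ i) • vecMulVec (f i) (f i))
    (hS0 : S0 = ∑ i ∈ univ.filter (fun i => 0 < ξ i), ξ i • vecMulVec (f i) (f i))
    (hAξ : Aξ = ∑ i ∈ univ.filter (fun i => 0 < ξ i), vecMulVec (f i) (f i))
    (hA : A = ((N : ℝ)⁻¹) • ∑ i, vecMulVec (f i) (f i))
    (hS1inv : IsUnit S1.det) (hAξinv : IsUnit Aξ.det) (hAinv : IsUnit A.det) :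
    (S1⁻¹ * S0 * S1⁻¹ - Aξ⁻¹).PosSemidef
      ∧ (Aξ⁻¹ - (((N : ℝ)) • A)⁻¹).PosSemidef
      ∧ ((∀ i, ξ i = 1 / (N : ℝ)) →
          S1⁻¹ * S0 * S1⁻¹ = Aξ⁻¹ ∧ Aξ⁻¹ = (((N : ℝ)) • A)⁻¹) :=
  stmt8_general f ξ hsum S1 S0 Aξ A hS1 hS0 hAξ hA hS1inv hAξinv
end
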